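/- The symplectic discrete Fourier transform commutes with the projector: for every function f : (ZMod 2d)² → ℂ, F(P f) = P(F f), where P := Wig ∘ Op. -/

import Mathlib

open scoped BigOperators
open Matrix

noncomputable section

/-- `omega n a = exp(2πi a / n)`, the `n`-th roots of unity raised to integer power `a`. -/
def omega (n : ℕ) (a : ℤ) : ℂ := Complex.exp (2 * Real.pi * Complex.I * a / n)

/-- `Zpow d k = Σ_j ω_d^(k·j) |j⟩⟨j|`, the `k`-th power of the clock operator. -/
def Zpow (d : ℕ) (k : ℤ) : Matrix (ZMod d) (ZMod d) ℂ :=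
  Matrix.of fun i j => if i = j then omega d (k * (j.val : ℤ)) else 0

/-- `Xpow d k = Σ_j |j+k⟩⟨j|`, the `k`-th power of the shift operator. -/
def Xpow (d : ℕ) (k : ℤ) : Matrix (ZMod d) (ZMod d) ℂ :=
  Matrix.of fun i j => if i = j + (k : ZMod d) then 1 else 0

/-- The Weyl–Heisenberg displacement operator `V(k) = ω_{2d}^{-k₁k₂} Z^{k₂} X^{k₁}` for `k ∈ ℤ²`. -/
def Vint (d : ℕ) [NeZero d] (k : ℤ × ℤ) : Matrix (ZMod d) (ZMod d) ℂ :=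
  omega (2 * d) (-(k.1 * k.2)) • (Zpow d k.2 * Xpow d k.1)

/-- The WHDO on the doubled phase space `(ZMod (2d))²`. -/
def V (d : ℕ) [NeZero d] (m : ZMod (2 * d) × ZMod (2 * d)) : Matrix (ZMod d) (ZMod d) ℂ :=
  Vint d ((m.1.val : ℤ), (m.2.val : ℤ))

/-- Discrete parity operator `R = Σ_j |-j⟩⟨j|`. -/
def R (d : ℕ) : Matrix (ZMod d) (ZMod d) ℂ :=
  Matrix.of fun i j => if i = -j then 1 else 0

/-- Doubled phase-point operator `A(m) = V(m)·R`. -/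
def A (d : ℕ) [NeZero d] (m : ZMod (2 * d) × ZMod (2 * d)) : Matrix (ZMod d) (ZMod d) ℂ :=
  V d m * R d

variable (d : ℕ) [NeZero d]

/-- Doubled Wigner transform: `Wig[O](m) = (1/(2d)) Tr(A(m)† O)`. -/
def Wig (O : Matrix (ZMod d) (ZMod d) ℂ) (m : ZMod (2 * d) × ZMod (2 * d)) : ℂ :=
  (1 / (2 * (d : ℂ))) * ((A d m)ᴴ * O).trace

/-- Doubled Weyl transform: `Op[f] = (1/2) Σ_m f(m) A(m)`. -/
def OpW (f : ZMod (2 * d) × ZMod (2 * d) → ℂ) : Matrix (ZMod d) (ZMod d) ℂ :=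
  (1 / 2 : ℂ) • ∑ m : ZMod (2 * d) × ZMod (2 * d), f m • A d m

/-- The projector `P = Wig ∘ Op` on functions on the doubled phase space. -/
def P (f : ZMod (2 * d) × ZMod (2 * d) → ℂ) : ZMod (2 * d) × ZMod (2 * d) → ℂ :=
  Wig d (OpW d f)

/-- Inner product on functions on the doubled phase space. -/
def ip (f g : ZMod (2 * d) × ZMod (2 * d) → ℂ) : ℂ :=
  ∑ m : ZMod (2 * d) × ZMod (2 * d), (starRingEnd ℂ) (f m) * g m

/-- Cross-correlation `(f ⋆ g)(m) = Σ_{m'} conj(f m') g(m'+m)`. -/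
def crossCor (f g : ZMod (2 * d) × ZMod (2 * d) → ℂ) (m : ZMod (2 * d) × ZMod (2 * d)) : ℂ :=
  ∑ m' : ZMod (2 * d) × ZMod (2 * d), (starRingEnd ℂ) (f m') * g (m' + m)

/-- The doubling map `ZMod d → ZMod (2d)`, `a ↦ 2a`. -/
def dbl (a : ZMod d) : ZMod (2 * d) := ((2 * a.val : ℕ) : ZMod (2 * d))

/-- The doubling map on the phase space. -/
def dbl2 (α : ZMod d × ZMod d) : ZMod (2 * d) × ZMod (2 * d) := (dbl d α.1, dbl d α.2)

/-- A stencil `M` is valid if its projection `M̄ = P M` is real-valued (M1),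
sums to 1 (M2), and satisfies the autocorrelation condition (M3). -/
def IsValidStencil (M : ZMod (2 * d) × ZMod (2 * d) → ℂ) : Prop :=
  (∀ m, (starRingEnd ℂ) (P d M m) = P d M m) ∧
  (∑ m : ZMod (2 * d) × ZMod (2 * d), P d M m) = 1 ∧
  (∀ α : ZMod d × ZMod d,
    crossCor d (P d M) (P d M) (dbl2 d α) = if α = 0 then 1 else 0)

/-- The `M`-PPO frame generated by a stencil `M`:
`A^M(α) = (1/2) Σ_{m'} M(m') A(m' + 2α)`. -/
def AM (M : ZMod (2 * d) × ZMod (2 * d) → ℂ) (α : ZMod d × ZMod d) :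
    Matrix (ZMod d) (ZMod d) ℂ :=
  (1 / 2 : ℂ) • ∑ m' : ZMod (2 * d) × ZMod (2 * d), M m' • A d (m' + dbl2 d α)

/-- A family of phase-point operators on `(ZMod d)²` is a valid PPO frame if it is
Hermitian (A1), trace-1 (A2), orthogonal (A3), and WHDO-covariant (A4). -/
def IsValidPPOFrame (B : ZMod d × ZMod d → Matrix (ZMod d) (ZMod d) ℂ) : Prop :=
  (∀ α, (B α)ᴴ = B α) ∧
  (∀ α, (B α).trace = 1) ∧
  (∀ α β, ((B α)ᴴ * B β).trace = if α = β then (d : ℂ) else 0) ∧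
  (∀ (k : ℤ × ℤ) (α : ZMod d × ZMod d),
    Vint d k * B α * (Vint d k)ᴴ = B (α + ((k.1 : ZMod d), (k.2 : ZMod d))))

/-- The `M`-Wigner transform: `Wig^M[O](α) = (1/d) Tr(A^M(α)† O)`. -/
def WigM (M : ZMod (2 * d) × ZMod (2 * d) → ℂ) (O : Matrix (ZMod d) (ZMod d) ℂ)
    (α : ZMod d × ZMod d) : ℂ :=
  (1 / (d : ℂ)) * ((AM d M α)ᴴ * O).trace

/-- The `M`-Weyl transform: `Op^M[f] = Σ_α f(α) A^M(α)`. -/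
def OpM (M : ZMod (2 * d) × ZMod (2 * d) → ℂ) (f : ZMod d × ZMod d → ℂ) :
    Matrix (ZMod d) (ZMod d) ℂ :=
  ∑ α : ZMod d × ZMod d, f α • AM d M α

/-- The symplectic discrete Fourier transform. -/
def SDFT (f : ZMod (2 * d) × ZMod (2 * d) → ℂ) (m : ZMod (2 * d) × ZMod (2 * d)) : ℂ :=
  (1 / (2 * (d : ℂ))) * ∑ m' : ZMod (2 * d) × ZMod (2 * d),
    omega (2 * d) (-((m.1.val : ℤ) * (m'.2.val : ℤ) - (m.2.val : ℤ) * (m'.1.val : ℤ))) * f m'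


/-- Coarse-grain-stencil PPO frame: `B(α) = (1/2) Σ_{b∈{0,1}²} A(2α + b)`. -/
def Bcgs (α : ZMod d × ZMod d) : Matrix (ZMod d) (ZMod d) ℂ :=
  (1 / 2 : ℂ) • ∑ b : ZMod 2 × ZMod 2,
    A d (dbl d α.1 + (b.1.val : ZMod (2 * d)), dbl d α.2 + (b.2.val : ZMod (2 * d)))

/-- Momentum basis state `|p⟩ = (1/√d) Σ_j ω_d^{p j} |j⟩`. -/
def pvec (p : ZMod d) : ZMod d → ℂ :=
  fun j => (1 / ((Real.sqrt d : ℝ) : ℂ)) * omega d ((p.val : ℤ) * (j.val : ℤ))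

/-- One-dimensional Dirichlet kernel `K(m) = (1/d) Σ_{t=-(d-1)/2}^{(d-1)/2} ω_{2d}^{t m}`. -/
def Kdir (m : ZMod (2 * d)) : ℂ :=
  (1 / (d : ℂ)) * ∑ t ∈ Finset.Icc (-(((d : ℤ) - 1) / 2)) (((d : ℤ) - 1) / 2),
    omega (2 * d) (t * (m.val : ℤ))

end

noncomputable section

lemma omega_add (n : ℕ) (a b : ℤ) : omega n (a + b) = omega n a * omega n b := by
  unfold omega
  rw [← Complex.exp_add]
  congr 1
  push_cast
  ring

lemma omega_eq_one (n : ℕ) (hn : n ≠ 0) (a : ℤ) (h : (n : ℤ) ∣ a) : omega n a = 1 := by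
  obtain ⟨k, rfl⟩ := h
  unfold omega
  have hnc : (n : ℂ) ≠ 0 := Nat.cast_ne_zero.mpr hn
  rw [show 2 * (Real.pi : ℂ) * Complex.I * ((n : ℤ) * k : ℤ) / n = (k : ℤ) * (2 * Real.pi * Complex.I) by push_cast; field_simp]
  exact Complex.exp_int_mul_two_pi_mul_I k

lemma omega_congr (n : ℕ) (hn : n ≠ 0) {a b : ℤ} (h : a ≡ b [ZMOD n]) :
    omega n a = omega n b := by
  have hd : (n : ℤ) ∣ b - a := Int.ModEq.dvd h
  have : omega n b = omega n a * omega n (b - a) := by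
    rw [← omega_add]; ring_nf
  rw [this, omega_eq_one n hn _ hd, mul_one]

lemma conj_omega (n : ℕ) (a : ℤ) : (starRingEnd ℂ) (omega n a) = omega n (-a) := by
  unfold omega
  rw [← Complex.exp_conj]
  congr 1
  simp [map_div₀, _root_.map_mul, Complex.conj_I, Complex.conj_ofNat]

lemma omega_two_mul (d : ℕ) (hd : d ≠ 0) (a : ℤ) : omega d a = omega (2 * d) (2 * a) := by
  unfold omega
  congr 1
  have : (d : ℂ) ≠ 0 := Nat.cast_ne_zero.mpr hd
  push_cast
  field_simp

lemma omega_mul_nat (n : ℕ) (a : ℤ) (k : ℕ) : omega n (a * k) = (omega n a) ^ k := by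
  unfold omega
  rw [← Complex.exp_nat_mul]
  congr 1
  push_cast
  ring

lemma omega_ne_one (d : ℕ) (hd : d ≠ 0) (c : ℤ) (h : ¬ (d : ℤ) ∣ c) : omega d c ≠ 1 := by
  intro he
  apply h
  unfold omega at he
  rw [Complex.exp_eq_one_iff] at he
  obtain ⟨k, hk⟩ := he
  have hdc : (d : ℂ) ≠ 0 := Nat.cast_ne_zero.mpr hd
  have hpi : (Real.pi : ℂ) ≠ 0 := by
    exact_mod_cast Complex.ofReal_ne_zero.mpr Real.pi_ne_zero
  have : (c : ℂ) = k * d := by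
    field_simp at hk
    have h2 : (2 : ℂ) * Real.pi * Complex.I * c = 2 * Real.pi * Complex.I * (k * d) := by
      rw [hk]; ring
    exact mul_left_cancel₀ (by simp [hpi, Complex.I_ne_zero]) h2
  have : c = k * d := by exact_mod_cast this
  exact Dvd.intro_left k (by linarith)

lemma sum_omega_val (d : ℕ) [NeZero d] (c : ℤ) :
    ∑ i : ZMod d, omega d (c * (i.val : ℤ)) = if (c : ZMod d) = 0 then (d : ℂ) else 0 := by
  have hd : d ≠ 0 := NeZero.ne d
  have hsum : ∑ i : ZMod d, omega d (c * (i.val : ℤ)) = ∑ k ∈ Finset.range d, (omega d c) ^ k := by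
    rw [Finset.sum_bij' (fun (i : ZMod d) _ => i.val) (fun (k : ℕ) _ => (k : ZMod d))]
    · intro i _; exact Finset.mem_range.mpr (ZMod.val_lt i)
    · intro k _; exact Finset.mem_univ _
    · intro i _; simp [ZMod.natCast_val, ZMod.cast_id]
    · intro k hk; exact ZMod.val_cast_of_lt (Finset.mem_range.mp hk)
    · intro i _; rw [omega_mul_nat]
  rw [hsum]
  by_cases h : (c : ZMod d) = 0
  · have : (d : ℤ) ∣ c := (ZMod.intCast_zmod_eq_zero_iff_dvd c d).mp h
    rw [omega_eq_one d hd c this, if_pos h]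
    simp
  · have hne : omega d c ≠ 1 := by
      apply omega_ne_one d hd
      intro hdvd
      exact h ((ZMod.intCast_zmod_eq_zero_iff_dvd c d).mpr hdvd)
    have hzd : (omega d c) ^ d = 1 := by
      rw [← omega_mul_nat, omega_eq_one d hd (c * d) ⟨c, by ring⟩]
    rw [geom_sum_eq hne, hzd, if_neg h]
    simp

lemma A_apply (d : ℕ) [NeZero d] (m : ZMod (2 * d) × ZMod (2 * d)) (i j : ZMod d) :
    A d m i j = if i = (m.1.val : ZMod d) - j then
      omega (2 * d) (-((m.1.val : ℤ) * (m.2.val : ℤ)) + 2 * ((m.2.val : ℤ) * (i.val : ℤ)))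
    else 0 := by
  have hd : d ≠ 0 := NeZero.ne d
  have h1 : A d m i j = V d m i (-j) := by
    unfold A R
    rw [Matrix.mul_apply]
    simp [Matrix.of_apply, mul_ite, mul_one, mul_zero]
  rw [h1]
  unfold V Vint
  rw [Matrix.smul_apply, Matrix.mul_apply]
  simp only [Zpow, Xpow, Matrix.of_apply, ite_mul, zero_mul, Finset.sum_ite_eq,
    Finset.mem_univ, if_true]
  simp only [mul_ite, mul_one, mul_zero, smul_eq_mul]
  rw [omega_add, omega_two_mul d hd ((m.2.val : ℤ) * (i.val : ℤ))]
  have hc : (i = -j + ((m.1.val : ℤ) : ZMod d)) ↔ (i = (m.1.val : ZMod d) - j) := by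
    constructor <;> intro h <;> rw [h] <;> push_cast <;> ring
  by_cases h : i = (m.1.val : ZMod d) - j
  · rw [if_pos (hc.mpr h), if_pos h]
  · rw [if_neg (fun hh => h (hc.mp hh)), if_neg h]

lemma traceAA (d : ℕ) [NeZero d] (a b : ZMod (2 * d) × ZMod (2 * d)) :
    ((A d a)ᴴ * A d b).trace =
      if (a.1.val : ZMod d) = (b.1.val : ZMod d) ∧ (a.2.val : ZMod d) = (b.2.val : ZMod d)
      then (d : ℂ) * omega (2 * d) ((a.1.val : ℤ) * (a.2.val : ℤ) - (b.1.val : ℤ) * (b.2.val : ℤ))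
      else 0 := by
  have hd : d ≠ 0 := NeZero.ne d
  have htr : ((A d a)ᴴ * A d b).trace = ∑ i : ZMod d, ∑ j : ZMod d,
      (starRingEnd ℂ) (A d a j i) * A d b j i := by
    rw [Matrix.trace]
    simp [Matrix.diag, Matrix.mul_apply, Matrix.conjTranspose_apply]
  rw [htr]
  by_cases h1 : (a.1.val : ZMod d) = (b.1.val : ZMod d)
  · have hterm : ∀ i j : ZMod d, (starRingEnd ℂ) (A d a j i) * A d b j i =
        if j = (a.1.val : ZMod d) - i then
          omega (2 * d) ((a.1.val : ℤ) * (a.2.val : ℤ) - (b.1.val : ℤ) * (b.2.val : ℤ))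
            * omega d (((b.2.val : ℤ) - (a.2.val : ℤ)) * (j.val : ℤ))
        else 0 := by
      intro i j
      rw [A_apply, A_apply, ← h1]
      by_cases hj : j = (a.1.val : ZMod d) - i
      · rw [if_pos hj, if_pos hj, if_pos hj, conj_omega]
        rw [omega_two_mul d hd (((b.2.val : ℤ) - (a.2.val : ℤ)) * (j.val : ℤ)), ← omega_add, ← omega_add]
        congr 1
        ring
      · rw [if_neg hj, if_neg hj, if_neg hj, map_zero, zero_mul]
    simp only [hterm]
    have hcol : ∀ i : ZMod d, ∑ j : ZMod d, (if j = (a.1.val : ZMod d) - i then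
          omega (2 * d) ((a.1.val : ℤ) * (a.2.val : ℤ) - (b.1.val : ℤ) * (b.2.val : ℤ))
            * omega d (((b.2.val : ℤ) - (a.2.val : ℤ)) * (j.val : ℤ)) else 0) =
        omega (2 * d) ((a.1.val : ℤ) * (a.2.val : ℤ) - (b.1.val : ℤ) * (b.2.val : ℤ))
            * omega d (((b.2.val : ℤ) - (a.2.val : ℤ)) * ((((a.1.val : ZMod d) - i)).val : ℤ)) := by
      intro i
      rw [Finset.sum_ite_eq' Finset.univ ((a.1.val : ZMod d) - i)]
      simp
    simp only [hcol]
    rw [show (∑ x : ZMod d, omega (2 * d) ((a.1.val : ℤ) * (a.2.val : ℤ) - (b.1.val : ℤ) * (b.2.val : ℤ))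
            * omega d (((b.2.val : ℤ) - (a.2.val : ℤ)) * ((((a.1.val : ZMod d) - x)).val : ℤ))) =
        ∑ j : ZMod d, omega (2 * d) ((a.1.val : ℤ) * (a.2.val : ℤ) - (b.1.val : ℤ) * (b.2.val : ℤ))
            * omega d (((b.2.val : ℤ) - (a.2.val : ℤ)) * (j.val : ℤ)) by
        exact Equiv.sum_comp (Equiv.subLeft ((a.1.val : ZMod d)))
          (fun j : ZMod d => omega (2 * d) ((a.1.val : ℤ) * (a.2.val : ℤ) - (b.1.val : ℤ) * (b.2.val : ℤ))
            * omega d (((b.2.val : ℤ) - (a.2.val : ℤ)) * (j.val : ℤ)))]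
    rw [← Finset.mul_sum, sum_omega_val]
    have hcond : ((((b.2.val : ℤ) - (a.2.val : ℤ)) : ℤ) : ZMod d) = 0 ↔
        (a.2.val : ZMod d) = (b.2.val : ZMod d) := by
      rw [Int.cast_sub, sub_eq_zero]
      push_cast
      exact ⟨fun h => h.symm, fun h => h.symm⟩
    by_cases h2 : (a.2.val : ZMod d) = (b.2.val : ZMod d)
    · rw [if_pos (hcond.mpr h2), if_pos ⟨h1, h2⟩]
      ring
    · rw [if_neg (fun hh => h2 (hcond.mp hh)), if_neg (fun hh => h2 hh.2), mul_zero]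
  · rw [if_neg (fun hh => h1 hh.1)]
    apply Finset.sum_eq_zero
    intro i _
    apply Finset.sum_eq_zero
    intro j _
    rw [A_apply, A_apply]
    by_cases hj : j = (a.1.val : ZMod d) - i
    · rw [if_pos hj, if_neg, mul_zero]
      intro hh
      apply h1
      have h3 : (a.1.val : ZMod d) - i = (b.1.val : ZMod d) - i := hj ▸ hh
      exact sub_left_inj.mp h3
    · rw [if_neg hj, map_zero, zero_mul]

lemma val_intCast (N : ℕ) [NeZero N] (x : ZMod N) : ((x.val : ℤ) : ZMod N) = x := by
  push_cast
  rw [ZMod.natCast_val, ZMod.cast_id]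

lemma vald_eq_pi (d : ℕ) [NeZero d] (x : ZMod (2 * d)) :
    ((x.val : ℕ) : ZMod d) = ZMod.castHom (dvd_mul_left d 2) (ZMod d) x := by
  rw [ZMod.castHom_apply, ZMod.natCast_val]

lemma kernel (d : ℕ) [NeZero d] (m n : ZMod (2 * d) × ZMod (2 * d)) :
    ∑ p : ZMod (2 * d) × ZMod (2 * d),
      omega (2 * d) (-((m.1.val : ℤ) * (p.2.val : ℤ) - (m.2.val : ℤ) * (p.1.val : ℤ))) *
        ((A d p)ᴴ * A d n).trace
    = ∑ p : ZMod (2 * d) × ZMod (2 * d),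
      omega (2 * d) (-((p.1.val : ℤ) * (n.2.val : ℤ) - (p.2.val : ℤ) * (n.1.val : ℤ))) *
        ((A d m)ᴴ * A d p).trace := by
  have hd : d ≠ 0 := NeZero.ne d
  have h2d : 2 * d ≠ 0 := by omega
  rw [← Equiv.sum_comp (Equiv.addRight (m - n))
      (fun p : ZMod (2 * d) × ZMod (2 * d) =>
        omega (2 * d) (-((p.1.val : ℤ) * (n.2.val : ℤ) - (p.2.val : ℤ) * (n.1.val : ℤ))) *
          ((A d m)ᴴ * A d p).trace)]
  apply Finset.sum_congr rfl
  intro p _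
  simp only [Equiv.coe_addRight]
  set q : ZMod (2 * d) × ZMod (2 * d) := p + (m - n) with hqdef
  have hq1 : q.1 = p.1 + (m.1 - n.1) := rfl
  have hq2 : q.2 = p.2 + (m.2 - n.2) := rfl
  set π : ZMod (2 * d) →+* ZMod d := ZMod.castHom (dvd_mul_left d 2) (ZMod d) with hπ
  rw [traceAA, traceAA]
  -- condition equivalence
  have hc1 : ((m.1.val : ℕ) : ZMod d) = ((q.1.val : ℕ) : ZMod d) ↔
      ((p.1.val : ℕ) : ZMod d) = ((n.1.val : ℕ) : ZMod d) := by
    rw [vald_eq_pi, vald_eq_pi, vald_eq_pi, vald_eq_pi, hq1]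
    rw [map_add, map_sub]
    constructor <;> intro h <;> linear_combination -h
  have hc2 : ((m.2.val : ℕ) : ZMod d) = ((q.2.val : ℕ) : ZMod d) ↔
      ((p.2.val : ℕ) : ZMod d) = ((n.2.val : ℕ) : ZMod d) := by
    rw [vald_eq_pi, vald_eq_pi, vald_eq_pi, vald_eq_pi, hq2]
    rw [map_add, map_sub]
    constructor <;> intro h <;> linear_combination -h
  by_cases h : ((p.1.val : ℕ) : ZMod d) = ((n.1.val : ℕ) : ZMod d) ∧
      ((p.2.val : ℕ) : ZMod d) = ((n.2.val : ℕ) : ZMod d)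
  · rw [if_pos h, if_pos ⟨hc1.mpr h.1, hc2.mpr h.2⟩]
    have hmul : ∀ x y : ℤ, omega (2 * d) x * ((d : ℂ) * omega (2 * d) y) =
        (d : ℂ) * omega (2 * d) (x + y) := by
      intro x y
      rw [omega_add]
      ring
    rw [hmul, hmul]
    congr 1
    apply omega_congr (2 * d) h2d
    -- integer abbreviations
    have hq1' : (q.1.val : ℤ) ≡ (p.1.val : ℤ) + (m.1.val : ℤ) - (n.1.val : ℤ) [ZMOD (2 * d : ℕ)] := by
      rw [← ZMod.intCast_eq_intCast_iff]
      rw [Int.cast_sub, Int.cast_add, val_intCast, val_intCast, val_intCast, val_intCast, hq1]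
      ring
    have hq2' : (q.2.val : ℤ) ≡ (p.2.val : ℤ) + (m.2.val : ℤ) - (n.2.val : ℤ) [ZMOD (2 * d : ℕ)] := by
      rw [← ZMod.intCast_eq_intCast_iff]
      rw [Int.cast_sub, Int.cast_add, val_intCast, val_intCast, val_intCast, val_intCast, hq2]
      ring
    have h3 : (d : ℤ) ∣ (p.1.val : ℤ) - (n.1.val : ℤ) := by
      rw [← ZMod.intCast_zmod_eq_zero_iff_dvd]
      push_cast
      rw [sub_eq_zero]
      exact h.1
    set M1 := (m.1.val : ℤ); set M2 := (m.2.val : ℤ)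
    set N1 := (n.1.val : ℤ); set N2 := (n.2.val : ℤ)
    set P1 := (p.1.val : ℤ); set P2 := (p.2.val : ℤ)
    set Q1 := (q.1.val : ℤ); set Q2 := (q.2.val : ℤ)
    obtain ⟨k, hk⟩ := h3
    have step1 : -(Q1 * N2 - Q2 * N1) + (M1 * M2 - Q1 * Q2) ≡
        -((P1 + M1 - N1) * N2 - (P2 + M2 - N2) * N1) +
          (M1 * M2 - (P1 + M1 - N1) * (P2 + M2 - N2)) [ZMOD (2 * d : ℕ)] := by
      exact (((hq1'.mul_right N2).sub (hq2'.mul_right N1)).neg).add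
        ((Int.ModEq.refl (M1 * M2)).sub (hq1'.mul hq2'))
    have step2 : -(M1 * P2 - M2 * P1) + (P1 * P2 - N1 * N2) ≡
        -((P1 + M1 - N1) * N2 - (P2 + M2 - N2) * N1) +
          (M1 * M2 - (P1 + M1 - N1) * (P2 + M2 - N2)) [ZMOD (2 * d : ℕ)] := by
      rw [Int.modEq_iff_dvd]
      refine ⟨-(k * (P2 + M2)), ?_⟩
      push_cast
      linear_combination (-2 * (P2 + M2)) * hk
    exact step2.trans step1.symm
  · rw [if_neg h, if_neg (fun hh => h ⟨hc1.mp hh.1, hc2.mp hh.2⟩), mul_zero, mul_zero]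

lemma P_apply (d : ℕ) [NeZero d] (f : ZMod (2 * d) × ZMod (2 * d) → ℂ)
    (m : ZMod (2 * d) × ZMod (2 * d)) :
    P d f m = (1 / (2 * (d : ℂ))) * ((1 / 2 : ℂ) *
      ∑ n : ZMod (2 * d) × ZMod (2 * d), f n * ((A d m)ᴴ * A d n).trace) := by
  unfold P Wig OpW
  rw [Matrix.mul_smul, Matrix.trace_smul, Matrix.mul_sum, Matrix.trace_sum]
  congr 1
  rw [smul_eq_mul]
  congr 1
  apply Finset.sum_congr rfl
  intro n _
  rw [Matrix.mul_smul, Matrix.trace_smul, smul_eq_mul]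

end

theorem stmt10 (d : ℕ) [NeZero d] (f : ZMod (2 * d) × ZMod (2 * d) → ℂ) :
    SDFT d (P d f) = P d (SDFT d f) := by
  funext m
  set C : ℂ := (1 / (2 * (d : ℂ))) * ((1 / (2 * (d : ℂ))) * (1 / 2)) with hC
  have hL : SDFT d (P d f) m = ∑ n : ZMod (2 * d) × ZMod (2 * d), (C * f n) *
      ∑ p : ZMod (2 * d) × ZMod (2 * d),
        omega (2 * d) (-((m.1.val : ℤ) * (p.2.val : ℤ) - (m.2.val : ℤ) * (p.1.val : ℤ))) *
          ((A d p)ᴴ * A d n).trace := by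
    unfold SDFT
    simp only [P_apply]
    rw [Finset.mul_sum]
    trans ∑ p : ZMod (2 * d) × ZMod (2 * d), ∑ n : ZMod (2 * d) × ZMod (2 * d),
        (C * f n) * (omega (2 * d) (-((m.1.val : ℤ) * (p.2.val : ℤ) - (m.2.val : ℤ) * (p.1.val : ℤ))) *
          ((A d p)ᴴ * A d n).trace)
    · apply Finset.sum_congr rfl
      intro p _
      rw [show (1 / (2 * (d : ℂ))) *
          (omega (2 * d) (-((m.1.val : ℤ) * (p.2.val : ℤ) - (m.2.val : ℤ) * (p.1.val : ℤ))) *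
            ((1 / (2 * (d : ℂ))) * ((1 / 2 : ℂ) *
              ∑ n : ZMod (2 * d) × ZMod (2 * d), f n * ((A d p)ᴴ * A d n).trace))) =
          (C * omega (2 * d) (-((m.1.val : ℤ) * (p.2.val : ℤ) - (m.2.val : ℤ) * (p.1.val : ℤ)))) *
            ∑ n : ZMod (2 * d) × ZMod (2 * d), f n * ((A d p)ᴴ * A d n).trace by rw [hC]; ring]
      rw [Finset.mul_sum]
      exact Finset.sum_congr rfl fun n _ => by ring
    · rw [Finset.sum_comm]
      exact Finset.sum_congr rfl fun n _ => (Finset.mul_sum _ _ _).symm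
  have hR : P d (SDFT d f) m = ∑ n : ZMod (2 * d) × ZMod (2 * d), (C * f n) *
      ∑ p : ZMod (2 * d) × ZMod (2 * d),
        omega (2 * d) (-((p.1.val : ℤ) * (n.2.val : ℤ) - (p.2.val : ℤ) * (n.1.val : ℤ))) *
          ((A d m)ᴴ * A d p).trace := by
    rw [P_apply]
    unfold SDFT
    rw [show (1 / (2 * (d : ℂ))) * ((1 / 2 : ℂ) *
        ∑ n : ZMod (2 * d) × ZMod (2 * d),
          ((1 / (2 * (d : ℂ))) * ∑ p : ZMod (2 * d) × ZMod (2 * d),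
            omega (2 * d) (-((n.1.val : ℤ) * (p.2.val : ℤ) - (n.2.val : ℤ) * (p.1.val : ℤ))) * f p) *
            ((A d m)ᴴ * A d n).trace) =
      ∑ n : ZMod (2 * d) × ZMod (2 * d), ((1 / (2 * (d : ℂ))) * ((1 / 2 : ℂ)) *
          (((1 / (2 * (d : ℂ))) * ∑ p : ZMod (2 * d) × ZMod (2 * d),
            omega (2 * d) (-((n.1.val : ℤ) * (p.2.val : ℤ) - (n.2.val : ℤ) * (p.1.val : ℤ))) * f p) *
            ((A d m)ᴴ * A d n).trace)) by rw [Finset.mul_sum, Finset.mul_sum]; exact Finset.sum_congr rfl fun n _ => by ring]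
    trans ∑ n : ZMod (2 * d) × ZMod (2 * d), ∑ p : ZMod (2 * d) × ZMod (2 * d),
        (C * f p) * (omega (2 * d) (-((n.1.val : ℤ) * (p.2.val : ℤ) - (n.2.val : ℤ) * (p.1.val : ℤ))) *
          ((A d m)ᴴ * A d n).trace)
    · apply Finset.sum_congr rfl
      intro n _
      rw [show (1 / (2 * (d : ℂ))) * ((1 / 2 : ℂ)) *
          (((1 / (2 * (d : ℂ))) * ∑ p : ZMod (2 * d) × ZMod (2 * d),
            omega (2 * d) (-((n.1.val : ℤ) * (p.2.val : ℤ) - (n.2.val : ℤ) * (p.1.val : ℤ))) * f p) *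
            ((A d m)ᴴ * A d n).trace) =
          (C * ((A d m)ᴴ * A d n).trace) *
            ∑ p : ZMod (2 * d) × ZMod (2 * d),
              omega (2 * d) (-((n.1.val : ℤ) * (p.2.val : ℤ) - (n.2.val : ℤ) * (p.1.val : ℤ))) * f p by
        rw [hC]; ring]
      rw [Finset.mul_sum]
      exact Finset.sum_congr rfl fun p _ => by ring
    · rw [Finset.sum_comm]
      exact Finset.sum_congr rfl fun p _ => (Finset.mul_sum _ _ _).symm
  rw [hL, hR]
  exact Finset.sum_congr rfl fun n _ => by rw [kernel d m n]
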